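/- arXiv:1506.07703 — 3 statements merged into one kernel-verified Lean document; each statement's English description precedes it below -/
import Mathlib

section
/- In a compact topological space with a basis of compact open sets, if the Cantor–Bendixson process terminates (i.e. some iterated Cantor–Bendixson derivative is empty), then the least ordinal λ for which the λ-th derivative is empty is not a limit ordinal. -/
section CB

variable (T : Type*) [TopologicalSpace T]

/-- The Cantor–Bendixson derivative of a subset `S`: the points of `S` which are not
isolated in `S` (with its subspace topology). -/
def cbDeriv (S : Set T) : Set T :=
  {x ∈ S | ¬ ∃ U : Set T, IsOpen U ∧ x ∈ U ∧ U ∩ S = {x}}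

/-- The transfinite iteration of the Cantor–Bendixson derivative, starting from the
whole space, taking derivatives at successor stages and intersections at limit
stages. -/
noncomputable def cbIter (o : Ordinal) : Set T :=
  Ordinal.limitRecOn (motive := fun _ => Set T) o
    Set.univ
    (fun _ ih => cbDeriv T ih)
    (fun o _ ih => ⋂ (o' : Ordinal) (h : o' < o), ih o' h)

/-- The Cantor–Bendixson rank of a point `x` is the unique ordinal `α` such that `x`
belongs to the `α`-th Cantor–Bendixson derivative but not to the `(α+1)`-st. -/
def CBRankIs (x : T) (α : Ordinal) : Prop :=
  x ∈ cbIter T α ∧ x ∉ cbIter T (α + 1)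

end CB

section CantorBendixson

variable {T : Type*} [TopologicalSpace T]

theorem cbDeriv_subset (S : Set T) : cbDeriv T S ⊆ S := fun _ hx => hx.1

theorem isClosed_cbDeriv {S : Set T} (hS : IsClosed S) : IsClosed (cbDeriv T S) := by
  refine isOpen_compl_iff.mp (isOpen_iff_forall_mem_open.mpr fun x hx => ?_)
  by_cases hxS : x ∈ S
  · obtain ⟨U, hU, hxU, hUS⟩ : ∃ U, IsOpen U ∧ x ∈ U ∧ U ∩ S = {x} := by
      simpa [cbDeriv, hxS] using hx
    -- `U` meets `S` only in `x`, which is isolated in `S`, so `U` misses `cbDeriv T S`.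
    refine ⟨U, fun y hyU hy => hy.2 ?_, hU, hxU⟩
    obtain rfl : y = x := (Set.ext_iff.mp hUS y).mp ⟨hyU, hy.1⟩
    exact ⟨U, hU, hyU, hUS⟩
  · exact ⟨Sᶜ, fun y hy h => hy h.1, hS.isOpen_compl, hxS⟩

theorem cbIter_zero : cbIter T 0 = Set.univ :=
  Ordinal.limitRecOn_zero _ _ _

theorem cbIter_succ (o : Ordinal) : cbIter T (o + 1) = cbDeriv T (cbIter T o) :=
  Ordinal.limitRecOn_add_one _ _ _ _

theorem cbIter_limit {o : Ordinal} (ho : Order.IsSuccLimit o) :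
    cbIter T o = ⋂ (o' : Ordinal) (_ : o' < o), cbIter T o' :=
  Ordinal.limitRecOn_limit _ _ _ _ ho

theorem cbIter_antitone : Antitone (cbIter T) := by
  intro a b hab
  induction b using Ordinal.limitRecOn with
  | zero => rw [nonpos_iff_eq_zero.mp hab]
  | add_one o ih =>
    rw [← Order.succ_eq_add_one] at hab
    rcases Order.le_succ_iff_eq_or_le.mp hab with rfl | h
    · rw [Order.succ_eq_add_one]
    · rw [cbIter_succ]
      exact (cbDeriv_subset _).trans (ih h)
  | limit o ho ih =>
    rcases hab.eq_or_lt with rfl | h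
    · rfl
    · rw [cbIter_limit ho]
      exact Set.biInter_subset_of_mem (s := Set.Iio o) (t := cbIter T) h

theorem isClosed_cbIter (o : Ordinal) : IsClosed (cbIter T o) := by
  induction o using Ordinal.limitRecOn with
  | zero => rw [cbIter_zero]; exact isClosed_univ
  | add_one o ih => rw [cbIter_succ]; exact isClosed_cbDeriv ih
  | limit o ho ih =>
    rw [cbIter_limit ho]
    exact isClosed_biInter ih

theorem cbIter_nonempty_of_isSuccLimit [CompactSpace T] {o : Ordinal} (ho : Order.IsSuccLimit o)
    (h : ∀ o' < o, (cbIter T o').Nonempty) : (cbIter T o).Nonempty := by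
  have : Nonempty (Set.Iio o) := ⟨⟨0, ho.bot_lt⟩⟩
  rw [cbIter_limit ho]
  change (⋂ o' ∈ Set.Iio o, cbIter T o').Nonempty
  rw [Set.biInter_eq_iInter]
  exact IsCompact.nonempty_iInter_of_directed_nonempty_isCompact_isClosed _
    (cbIter_antitone.comp_monotone (Subtype.mono_coe _)).directed_ge
    (fun i => h i i.2) (fun i => (isClosed_cbIter i).isCompact) (fun i => isClosed_cbIter i)

end CantorBendixson

theorem least_empty_cbIter_not_isLimit_general
    {T : Type*} [TopologicalSpace T] [CompactSpace T]
    (lam : Ordinal) (hempty : cbIter T lam = ∅)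
    (hleast : ∀ lam' < lam, cbIter T lam' ≠ ∅) :
    ¬ Order.IsSuccLimit lam := fun hlim =>
  (cbIter_nonempty_of_isSuccLimit hlim fun o' ho' =>
    Set.nonempty_iff_ne_empty.mpr (hleast o' ho')).ne_empty hempty

/-- In a compact topological space with a basis of compact open sets, if the
Cantor–Bendixson process terminates (some iterated derivative is empty), then the least
ordinal `λ` for which the `λ`-th derivative is empty is not a limit ordinal. -/
theorem least_empty_cbIter_not_isLimit
    {T : Type*} [TopologicalSpace T] [CompactSpace T]
    (B : Set (Set T)) (hbasis : TopologicalSpace.IsTopologicalBasis B)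
    (hcpt : ∀ U ∈ B, IsCompact U)
    (lam : Ordinal) (hempty : cbIter T lam = ∅)
    (hleast : ∀ lam' < lam, cbIter T lam' ≠ ∅) :
    ¬ Order.IsSuccLimit lam :=
  least_empty_cbIter_not_isLimit_general lam hempty hleast
end

section
/- Over a domestic string algebra, if two bands b and b' have the same first letter then b = b'. -/
/-!
Combinatorics of strings and bands over a string algebra, presented abstractly:
a string algebra `KQ/I` is recorded by its quiver (vertices, arrows with source and
target) together with the relation `comp b a`, meaning that the length-two path
"`a` followed by `b`" does not lie in the monomial ideal `I`.  The defining conditions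
of a string algebra are recorded as fields.
-/

/-- Combinatorial data of a string algebra. -/
structure StringData where
  /-- vertices -/
  V : Type
  /-- arrows -/
  A : Type
  /-- source of an arrow -/
  s : A → V
  /-- target of an arrow -/
  t : A → V
  /-- `comp b a` : the composite path "`a` then `b`" avoids the monomial relations -/
  comp : A → A → Prop
  comp_st : ∀ a b : A, comp b a → s b = t a
  /-- every vertex has at most two incoming arrows -/
  two_in : ∀ (v : V) (a b c : A), t a = v → t b = v → t c = v → a = b ∨ a = c ∨ b = c
  /-- every vertex has at most two outgoing arrows -/
  two_out : ∀ (v : V) (a b c : A), s a = v → s b = v → s c = v → a = b ∨ a = c ∨ b = c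
  /-- for every arrow there is at most one arrow that may follow it -/
  uniq_left : ∀ a b b' : A, comp b a → comp b' a → b = b'
  /-- for every arrow there is at most one arrow that it may follow -/
  uniq_right : ∀ a g g' : A, comp a g → comp a g' → g = g'

namespace StringData

variable (D : StringData)

/-- A letter is a direct arrow (`Sum.inl`) or an inverse arrow (`Sum.inr`). -/
abbrev Letter := D.A ⊕ D.A

/-- `Adj l l'` : the letter `l` may be immediately followed (to the right, reading a
string from left to right) by the letter `l'`, avoiding relations and immediate
backtracks. -/
def Adj : D.Letter → D.Letter → Prop
  | Sum.inl a, Sum.inl a' => D.comp a a'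
  | Sum.inl a, Sum.inr b => a ≠ b ∧ D.s a = D.s b
  | Sum.inr b, Sum.inl a => b ≠ a ∧ D.t b = D.t a
  | Sum.inr b, Sum.inr b' => D.comp b' b

/-- A string: a nonempty reduced walk avoiding the relations. -/
def IsString (w : List D.Letter) : Prop :=
  w ≠ [] ∧ w.Chain' D.Adj

/-- The `k`-th power of a word. -/
def wpow {X : Type*} (w : List X) (k : ℕ) : List X :=
  (List.replicate k w).flatten

/-- The formal inverse of a letter. -/
def linv : D.Letter → D.Letter := Sum.elim Sum.inr Sum.inl

/-- The formal inverse of a word. -/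
def winv (w : List D.Letter) : List D.Letter := (w.map D.linv).reverse

/-- `IsRotation u v` : `v` is a cyclic permutation (rotation) of `u`. -/
def IsRotation {X : Type*} (u v : List X) : Prop :=
  ∃ p q : List X, u = p ++ q ∧ v = q ++ p

/-- A band: a string of the form `α ⋯ β⁻¹` (starting with a direct letter and ending
with an inverse letter), which closes up cyclically (so that all of its rotations are
strings) and which is primitive, i.e. not a proper power. -/
def IsBand (w : List D.Letter) : Prop :=
  D.IsString w ∧
  (∃ (a : D.A) (x : List D.Letter) (b : D.A), w = Sum.inl a :: (x ++ [Sum.inr b])) ∧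
  (∃ l l' : D.Letter, w.getLast? = some l ∧ w.head? = some l' ∧ D.Adj l l') ∧
  (∀ (v : List D.Letter) (k : ℕ), w = wpow v k → k = 1)

/-- A string algebra is domestic when it has only finitely many bands. -/
def Domestic : Prop := {w : List D.Letter | D.IsBand w}.Finite

end StringData

/-!
Since `b` and `b'` close up and start with the same letter, every word `bᵏ b'` closes up
into a cyclic string, so its primitive root is a band. As there are only finitely many bands,
two exponents `k₁ < k₂` give the same root `r`; cancelling `b'` yields `b^(k₂ - k₁) = rᵉ`.
The infinite words `b b b ⋯` and `r r r ⋯` then coincide and have the periods `|b|`, `|r|`,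
hence `gcd(|b|, |r|)`, and primitivity forces `b = r`. Finally
`b^k₁ b' = b^m` makes `b'` a power of `b`, so `b' = b` by primitivity of `b'`.
-/

open Function

theorem Function.Periodic.nat_mod {α : Type*} {f : ℕ → α} {m n : ℕ} (hm : Periodic f m)
    (hn : Periodic f n) : Periodic f (m % n) := fun x => by
  rw [← hn.nat_mul (m / n) (x + m % n), Nat.cast_id, add_assoc, mul_comm, Nat.mod_add_div, hm]

theorem Function.Periodic.nat_gcd {α : Type*} {f : ℕ → α} {m n : ℕ} (hm : Periodic f m)
    (hn : Periodic f n) : Periodic f (m.gcd n) := by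
  induction m, n using Nat.gcd.induction with
  | H0 n => rwa [Nat.gcd_zero_left]
  | H1 m n _ ih => rw [Nat.gcd_rec]; exact ih (hn.nat_mod hm) hm

namespace StringData

section Words

variable {X : Type*}

@[simp]
theorem wpow_zero (w : List X) : wpow w 0 = [] := rfl

theorem wpow_succ (w : List X) (k : ℕ) : wpow w (k + 1) = w ++ wpow w k := by
  simp [wpow, List.replicate_succ]

theorem wpow_add (w : List X) (a b : ℕ) : wpow w (a + b) = wpow w a ++ wpow w b := by
  induction a with
  | zero => simp
  | succ a ih => rw [Nat.add_right_comm, wpow_succ, wpow_succ, ih, List.append_assoc]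

@[simp]
theorem wpow_one (w : List X) : wpow w 1 = w := by
  simp [wpow_succ]

theorem wpow_succ' (w : List X) (k : ℕ) : wpow w (k + 1) = wpow w k ++ w := by
  rw [wpow_add, wpow_one]

theorem wpow_mul (w : List X) (m n : ℕ) : wpow w (m * n) = wpow (wpow w n) m := by
  induction m with
  | zero => simp
  | succ m ih => rw [Nat.succ_mul, add_comm, wpow_add, ih, wpow_succ]

@[simp]
theorem length_wpow (w : List X) (k : ℕ) : (wpow w k).length = k * w.length := by
  simp [wpow, List.sum_replicate]

theorem getD_wpow (w : List X) (c : X) {k n : ℕ} (h : n < k * w.length) :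
    (wpow w k).getD n c = w.getD (n % w.length) c := by
  induction k generalizing n with
  | zero => simp at h
  | succ k ih =>
    rw [wpow_succ]
    rcases lt_or_ge n w.length with hn | hn
    · rw [List.getD_append _ _ _ _ hn, Nat.mod_eq_of_lt hn]
    · rw [List.getD_append_right _ _ _ _ hn, ih (by rw [Nat.succ_mul] at h; omega),
        ← Nat.mod_eq_sub_mod hn]

/-- The infinite word `w w w ⋯`, constantly `c` when `w = []`. -/
def cycle (w : List X) (c : X) (n : ℕ) : X := w.getD (n % w.length) c

theorem periodic_cycle (w : List X) (c : X) : Periodic (cycle w c) w.length := fun n => by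
  simp [cycle]

theorem cycle_wpow (w : List X) (c : X) {k : ℕ} (hk : 0 < k) :
    cycle (wpow w k) c = cycle w c := by
  funext n
  rcases eq_or_ne w [] with rfl | hw
  · simp [cycle, wpow]
  · have hlen : 0 < k * w.length := Nat.mul_pos hk (List.length_pos_iff.2 hw)
    simp only [cycle, length_wpow]
    rw [getD_wpow _ _ (Nat.mod_lt _ hlen), Nat.mod_mod_of_dvd _ (dvd_mul_left _ _)]

theorem eq_of_length_eq_of_cycle_eq {u v : List X} {c : X} (hl : u.length = v.length)
    (h : cycle u c = cycle v c) : u = v :=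
  List.ext_getElem hl fun n hu hv => by
    simpa [cycle, Nat.mod_eq_of_lt hu, Nat.mod_eq_of_lt hv, hu, hv] using congrFun h n

theorem eq_wpow_take_of_periodic {w : List X} {c : X} {g : ℕ} (hg : g ∣ w.length)
    (h : Periodic (cycle w c) g) : w = wpow (w.take g) (w.length / g) := by
  rcases eq_or_ne w [] with rfl | hw
  · simp [wpow]
  have hw : 0 < w.length := List.length_pos_iff.2 hw
  have hg0 : 0 < g := Nat.pos_of_dvd_of_pos hg hw
  have hgw : g ≤ w.length := Nat.le_of_dvd hw hg
  have htake : (w.take g).length = g := List.length_take_of_le hgw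
  refine eq_of_length_eq_of_cycle_eq (c := c) ?_ ?_
  · rw [length_wpow, htake, Nat.div_mul_cancel hg]
  · rw [cycle_wpow _ _ (Nat.div_pos hgw hg0)]
    funext n
    have hn : n % g < w.length := (Nat.mod_lt n hg0).trans_le hgw
    rw [← h.map_mod_nat n]
    simp only [cycle, htake, Nat.mod_eq_of_lt hn, List.getD_eq_getElem?_getD,
      List.getElem?_take_of_lt (Nat.mod_lt n hg0)]

def IsPrimitive (w : List X) : Prop := ∀ v k, w = wpow v k → k = 1

theorem IsPrimitive.ne_nil {w : List X} (hw : IsPrimitive w) : w ≠ [] := by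
  rintro rfl
  have := hw [] 2 (by simp [wpow])
  omega

theorem IsPrimitive.eq_length_of_periodic {w : List X} {c : X} {g : ℕ} (hw : IsPrimitive w)
    (hg : g ∣ w.length) (h : Periodic (cycle w c) g) : g = w.length :=
  Nat.eq_of_dvd_of_div_eq_one hg (hw _ _ (eq_wpow_take_of_periodic hg h))

theorem IsPrimitive.eq_of_wpow_eq {x y : List X} {d e : ℕ} (hx : IsPrimitive x)
    (hy : IsPrimitive y) (hd : 0 < d) (h : wpow x d = wpow y e) : x = y := by
  obtain ⟨c, -⟩ := List.exists_mem_of_ne_nil x hx.ne_nil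
  have he : 0 < e := by
    refine Nat.pos_of_ne_zero fun he => hx.ne_nil ?_
    simpa [he, hd.ne'] using congrArg List.length h
  have hcycle : cycle x c = cycle y c := by rw [← cycle_wpow x c hd, h, cycle_wpow y c he]
  have hgcd : Periodic (cycle x c) (x.length.gcd y.length) :=
    (periodic_cycle x c).nat_gcd (hcycle ▸ periodic_cycle y c)
  have hx' := hx.eq_length_of_periodic (Nat.gcd_dvd_left _ _) hgcd
  have hy' := hy.eq_length_of_periodic (Nat.gcd_dvd_right _ _) (hcycle ▸ hgcd)
  exact eq_of_length_eq_of_cycle_eq (hx'.symm.trans hy') hcycle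

theorem exists_primitive_root {w : List X} (hw : w ≠ []) :
    ∃ v k, IsPrimitive v ∧ w = wpow v k := by
  induction hn : w.length using Nat.strong_induction_on generalizing w with
  | _ n ih =>
    by_cases hp : IsPrimitive w
    · exact ⟨w, 1, hp, (wpow_one w).symm⟩
    simp only [IsPrimitive, not_forall] at hp
    obtain ⟨u, j, rfl, hj⟩ := hp
    have hu : u ≠ [] := by rintro rfl; simp [wpow] at hw
    have hj0 : j ≠ 0 := by rintro rfl; simp at hw
    have hlt : u.length < n := by
      have := List.length_pos_iff.2 hu
      calc u.length < 2 * u.length := by omega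
        _ ≤ j * u.length := Nat.mul_le_mul_right _ (by omega)
        _ = n := by rw [← hn, length_wpow]
    obtain ⟨v, k, hv, rfl⟩ := ih u.length hlt hu rfl
    exact ⟨v, j * k, hv, (wpow_mul v j k).symm⟩

theorem IsPrimitive.eq_of_wpow_append_eq_wpow {u v : List X} {k m : ℕ} (hv : IsPrimitive v)
    (h : wpow u k ++ v = wpow u m) : v = u := by
  have hlen := congrArg List.length h
  simp only [List.length_append, length_wpow] at hlen
  have hkm : k < m :=
    Nat.lt_of_mul_lt_mul_right (a := u.length) (by have := List.length_pos_iff.2 hv.ne_nil; omega)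
  rw [← Nat.add_sub_cancel' hkm.le, wpow_add] at h
  have hv' := List.append_cancel_left h
  rw [hv', hv _ _ hv', wpow_one]

theorem wpow_sub_eq_of_append_eq_wpow {u v r : List X} {k₁ k₂ m₁ m₂ : ℕ} (hk : k₁ ≤ k₂)
    (hr : r ≠ []) (h₁ : wpow u k₁ ++ v = wpow r m₁) (h₂ : wpow u k₂ ++ v = wpow r m₂) :
    wpow u (k₂ - k₁) = wpow r (m₂ - m₁) := by
  have hm : m₁ ≤ m₂ := by
    have hl₁ := congrArg List.length h₁
    have hl₂ := congrArg List.length h₂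
    simp only [List.length_append, length_wpow] at hl₁ hl₂
    refine Nat.le_of_mul_le_mul_right ?_ (List.length_pos_iff.2 hr)
    rw [← hl₁, ← hl₂]
    exact Nat.add_le_add_right (Nat.mul_le_mul_right _ hk) _
  apply List.append_cancel_right (bs := wpow r m₁)
  rw [← wpow_add, Nat.sub_add_cancel hm, ← h₂, ← h₁, ← List.append_assoc, ← wpow_add,
    Nat.sub_add_cancel hk]

end Words

section Bands

/-- A band up to primitivity. -/
def IsCyclicString (D : StringData) (w : List D.Letter) : Prop :=
  ∃ a β, w.head? = some (.inl a) ∧ w.getLast? = some (.inr β) ∧ w.IsChain D.Adj ∧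
    D.Adj (.inr β) (.inl a)

variable {D : StringData}

theorem isBand_iff {w : List D.Letter} : D.IsBand w ↔ D.IsCyclicString w ∧ IsPrimitive w := by
  constructor
  · rintro ⟨⟨-, hchain⟩, ⟨a, x, β, rfl⟩, ⟨l, l', hl, hl', hadj⟩, hprim⟩
    simp only [List.head?_cons, Option.some.injEq] at hl'
    rw [← List.cons_append, List.getLast?_concat, Option.some.injEq] at hl
    subst hl hl'
    exact ⟨⟨a, β, rfl, by rw [← List.cons_append, List.getLast?_concat], hchain, hadj⟩, hprim⟩
  · rintro ⟨⟨a, β, ha, hβ, hchain, hadj⟩, hprim⟩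
    obtain ⟨t, rfl⟩ := List.head?_eq_some_iff.1 ha
    rcases t.eq_nil_or_concat' with rfl | ⟨x, l, rfl⟩
    · simp at hβ
    · rw [← List.cons_append, List.getLast?_concat, Option.some.injEq] at hβ
      subst hβ
      refine ⟨⟨by simp, hchain⟩, ⟨a, x, β, rfl⟩, ⟨_, _, ?_, rfl, hadj⟩, hprim⟩
      rw [← List.cons_append, List.getLast?_concat]

theorem IsCyclicString.ne_nil {w : List D.Letter} (hw : D.IsCyclicString w) : w ≠ [] := by
  rintro rfl
  simp [IsCyclicString] at hw

theorem IsCyclicString.append {u v : List D.Letter} (hu : D.IsCyclicString u)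
    (hv : D.IsCyclicString v) (h : u.head? = v.head?) : D.IsCyclicString (u ++ v) := by
  obtain ⟨a, β, hua, huβ, huc, hadj⟩ := id hu
  obtain ⟨a', β', hva, hvβ, hvc, hadj'⟩ := id hv
  obtain rfl : a = a' := by simpa [hua, hva] using h
  refine ⟨a, β', ?_, ?_, huc.append hvc ?_, hadj'⟩
  · rw [List.head?_append_of_ne_nil _ hu.ne_nil, hua]
  · rw [List.getLast?_append_of_ne_nil _ hv.ne_nil, hvβ]
  · intro l hl l' hl'
    simp only [huβ, hva, Option.mem_def, Option.some.injEq] at hl hl'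
    subst hl hl'
    exact hadj

theorem IsCyclicString.wpow_append {u v : List D.Letter} (hu : D.IsCyclicString u)
    (hv : D.IsCyclicString v) (h : u.head? = v.head?) (k : ℕ) :
    D.IsCyclicString (wpow u k ++ v) := by
  induction k with
  | zero => simpa using hv
  | succ k ih =>
    rw [wpow_succ, List.append_assoc]
    refine hu.append ih ?_
    cases k with
    | zero => simpa using h
    | succ k => rw [wpow_succ, List.append_assoc, List.head?_append_of_ne_nil _ hu.ne_nil]

theorem IsCyclicString.of_eq_wpow {w v : List D.Letter} {k : ℕ} (hw : D.IsCyclicString w)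
    (h : w = wpow v k) : D.IsCyclicString v := by
  obtain ⟨j, rfl⟩ : ∃ j, k = j + 1 :=
    Nat.exists_eq_add_one.2 (Nat.pos_of_ne_zero fun hk => hw.ne_nil (by simp [h, hk]))
  have hv : v ≠ [] := fun hv => hw.ne_nil (by simp [h, hv, wpow])
  obtain ⟨a, β, ha, hβ, hchain, hadj⟩ := hw
  refine ⟨a, β, ?_, ?_, ?_, hadj⟩
  · rwa [h, wpow_succ, List.head?_append_of_ne_nil _ hv] at ha
  · rwa [h, wpow_succ', List.getLast?_append_of_ne_nil _ hv] at hβ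
  · rw [h, wpow_succ] at hchain
    exact hchain.left_of_append

end Bands

end StringData

/-- Over a domestic string algebra, if two bands `b` and `b'` have the same first letter
then `b = b'`. -/
theorem band_eq_of_head_eq (D : StringData) (hdom : D.Domestic)
    (b b' : List D.Letter) (hb : D.IsBand b) (hb' : D.IsBand b')
    (hhead : b.head? = b'.head?) : b = b' := by
  open StringData in
  obtain ⟨hbc, hbp⟩ := isBand_iff.1 hb
  obtain ⟨hbc', hbp'⟩ := isBand_iff.1 hb'
  have hW := hbc.wpow_append hbc' hhead
  choose r m hr hrm using fun k => exists_primitive_root (hW k).ne_nil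
  have hband (k : ℕ) : r k ∈ {w | D.IsBand w} :=
    isBand_iff.2 ⟨(hW k).of_eq_wpow (hrm k), hr k⟩
  obtain ⟨k₁, k₂, hk, hr₁₂⟩ := Set.Finite.exists_lt_map_eq_of_forall_mem hband hdom
  have hpow := wpow_sub_eq_of_append_eq_wpow hk.le (hr k₁).ne_nil (hrm k₁) (hr₁₂ ▸ hrm k₂)
  have hbr : b = r k₁ := hbp.eq_of_wpow_eq (hr k₁) (Nat.sub_pos_of_lt hk) hpow
  exact (hbp'.eq_of_wpow_append_eq_wpow ((hrm k₁).trans (by rw [← hbr]))).symm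
end

section
/- Elementary duality D is an anti-isomorphism of the lattice of pp formulas for left R-modules with the lattice of pp formulas for right R-modules, satisfying D(φ ∧ ψ) = Dφ + Dψ, D(φ + ψ) = Dφ ∧ Dψ, and D²φ equivalent to φ. Consequently, for any interval [ψ, φ] in the left pp-lattice, the m-dimension of [ψ, φ] equals the m-dimension of the dual interval [Dφ, Dψ] in the right pp-lattice. -/
/-!
A self-contained framework for pp formulas (in finitely many free variables) over a
ring `R`, pure-injective modules, the Ziegler spectrum, and m-dimension of intervals of
pp formulas.
-/

/-- A pp formula in one free variable over `R`:
`φ(x) = ∃ (y : Y → M), ∀ j : K, a j • x + ∑ i, H i j • y i = 0`. -/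
structure PP (R : Type) [Ring R] where
  /-- index type of the existentially quantified variables -/
  Y : Type
  /-- index type of the linear conditions -/
  K : Type
  [fY : Fintype Y]
  [fK : Fintype K]
  a : K → R
  H : Y → K → R

attribute [instance] PP.fY PP.fK

namespace PP

variable {R : Type} [Ring R]

/-- The solution set of a pp formula in a module. -/
def sol (φ : PP R) (M : Type) [AddCommGroup M] [Module R M] : Set M :=
  {x | ∃ y : φ.Y → M, ∀ j : φ.K, φ.a j • x + ∑ i : φ.Y, φ.H i j • y i = 0}

/-- Implication of pp formulas: `φ ≤ ψ` iff in every module the solution set of `φ` is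
contained in that of `ψ`. -/
def ple (φ ψ : PP R) : Prop :=
  ∀ (M : Type) [AddCommGroup M] [Module R M], φ.sol M ⊆ ψ.sol M

instance : Preorder (PP R) where
  le := ple
  le_refl := fun φ M _ _ => le_refl _
  le_trans := fun φ ψ θ h h' M _ _ => le_trans (h M) (h' M)

/-- Equivalence of pp formulas. -/
def pequiv (φ ψ : PP R) : Prop := φ ≤ ψ ∧ ψ ≤ φ

/-- The conjunction `φ ∧ ψ` of two pp formulas. -/
def meet (φ ψ : PP R) : PP R where
  Y := φ.Y ⊕ ψ.Y
  K := φ.K ⊕ ψ.K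
  a := Sum.elim φ.a ψ.a
  H := fun i j => match i, j with
    | Sum.inl i, Sum.inl j => φ.H i j
    | Sum.inr i, Sum.inr j => ψ.H i j
    | _, _ => 0

/-- The sum `φ + ψ` of two pp formulas (defining the sum of the solution sets). -/
def join (φ ψ : PP R) : PP R where
  Y := Unit ⊕ (φ.Y ⊕ ψ.Y)
  K := φ.K ⊕ ψ.K
  a := Sum.elim (fun _ => 0) ψ.a
  H := fun i j => match i, j with
    | Sum.inl _, Sum.inl j => φ.a j
    | Sum.inl _, Sum.inr j => -(ψ.a j)
    | Sum.inr (Sum.inl i), Sum.inl j => φ.H i j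
    | Sum.inr (Sum.inr i), Sum.inr j => ψ.H i j
    | _, _ => 0

end PP

/-- A pp formula in `t` free variables over `R`. -/
structure PPt (R : Type) [Ring R] (t : ℕ) where
  Y : Type
  K : Type
  [fY : Fintype Y]
  [fK : Fintype K]
  a : Fin t → K → R
  H : Y → K → R

attribute [instance] PPt.fY PPt.fK

/-- The solution set of a pp formula in `t` free variables in a module. -/
def PPt.sol {R : Type} [Ring R] {t : ℕ} (φ : PPt R t) (M : Type) [AddCommGroup M]
    [Module R M] : Set (Fin t → M) :=
  {x | ∃ y : φ.Y → M, ∀ j : φ.K,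
    (∑ s : Fin t, φ.a s j • x s) + ∑ i : φ.Y, φ.H i j • y i = 0}

/-- A pure embedding: an injective linear map reflecting all pp formulas. -/
def IsPureEmb {R : Type} [Ring R] {A B : Type} [AddCommGroup A] [Module R A]
    [AddCommGroup B] [Module R B] (f : A →ₗ[R] B) : Prop :=
  Function.Injective f ∧
    ∀ (t : ℕ) (φ : PPt R t) (x : Fin t → A),
      (fun s => f (x s)) ∈ φ.sol B → x ∈ φ.sol A

/-- A module is pure-injective if every linear map to it from the domain of a pure
embedding extends along that pure embedding. -/
def PureInjective (R : Type) [Ring R] (M : Type) [AddCommGroup M] [Module R M] : Prop :=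
  ∀ (A B : Type) [AddCommGroup A] [Module R A] [AddCommGroup B] [Module R B]
    (g : A →ₗ[R] B), IsPureEmb g →
      ∀ h : A →ₗ[R] M, ∃ h' : B →ₗ[R] M, h' ∘ₗ g = h

/-- A point of the Ziegler spectrum of `R`: an indecomposable pure-injective module. -/
structure ZgPt (R : Type) [Ring R] where
  M : Type
  [acg : AddCommGroup M]
  [mod : Module R M]
  nontriv : Nontrivial M
  indec : ∀ e : M →ₗ[R] M, e ∘ₗ e = e → e = 0 ∨ e = LinearMap.id
  pinj : PureInjective R M

attribute [instance] ZgPt.acg ZgPt.mod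

/-- The basic open set `(φ/ψ)` of the Ziegler spectrum: the points on which the pp-pair
`φ/ψ` is open. -/
def basicOpen {R : Type} [Ring R] (φ ψ : PP R) : Set (ZgPt R) :=
  {N | ¬ φ.sol N.M ⊆ ψ.sol N.M}

/-- The Ziegler topology, generated by the basic open sets `(φ/ψ)` for pp-pairs
`φ ≥ ψ`. -/
instance zgTopology (R : Type) [Ring R] : TopologicalSpace (ZgPt R) :=
  TopologicalSpace.generateFrom {U | ∃ φ ψ : PP R, ψ ≤ φ ∧ U = basicOpen φ ψ}

section MDim

variable {P : Type*} [Preorder P]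

/-- `[x, y]` has finite length modulo `r`: there is a uniform bound on the lengths of
strictly increasing chains inside `[x, y]` no two consecutive members of which are
identified by `r`. -/
def FinLenBetween (r : P → P → Prop) (x y : P) : Prop :=
  ∃ n : ℕ, ∀ (m : ℕ) (f : Fin (m + 1) → P), StrictMono f →
    (∀ i, x ≤ f i ∧ f i ≤ y) →
    (∀ i : Fin m, ¬ r (f i.castSucc) (f i.succ)) → m ≤ n

/-- The transfinite sequence of congruences defining m-dimension: at a successor stage
collapse comparable pairs whose interval has finite length modulo the previous
congruence; at limit stages take unions. -/
noncomputable def mdimCong (P : Type*) [Preorder P] (o : Ordinal) : P → P → Prop :=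
  Ordinal.limitRecOn (motive := fun _ => P → P → Prop) o
    (fun x y => x = y)
    (fun _ ih => Relation.EqvGen
      (fun x y => ih x y ∨ (x ≤ y ∧ FinLenBetween ih x y) ∨ (y ≤ x ∧ FinLenBetween ih y x)))
    (fun o _ ih x y => ∃ (o' : Ordinal) (h : o' < o), ih o' h x y)

/-- `MDimIs P d` : the m-dimension of the ordered set `P` is `d`. -/
def MDimIs (P : Type*) [Preorder P] (d : Ordinal) : Prop :=
  (∀ x y : P, mdimCong P (d + 1) x y) ∧ (d = 0 ∨ ¬ ∀ x y : P, mdimCong P d x y)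

end MDim

/-- The interval `[ψ, φ]` in the lattice of pp formulas. -/
def PPInterval {R : Type} [Ring R] (ψ φ : PP R) : Type 1 :=
  {θ : PP R // ψ ≤ θ ∧ θ ≤ φ}

instance {R : Type} [Ring R] (ψ φ : PP R) : Preorder (PPInterval ψ φ) where
  le := fun a b => a.1 ≤ b.1
  le_refl := fun a => le_refl (α := PP R) a.1
  le_trans := fun _ _ _ h h' => le_trans (α := PP R) h h'


/-!
For `φ(x) = ∃ y, a x + H y = 0` the elementary dual is `Dφ(x) = ∃ z, x = aᵒᵖ z ∧ Hᵒᵖ z = 0`.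
Implication of pp formulas is syntactic: evaluating `φ ≤ ψ` at the generic solution of `φ` in
its free realisation produces a substitution turning every equation of `ψ` into a linear
combination of equations of `φ`, and transposing these matrices over `Rᵐᵒᵖ` gives `Dψ ≤ Dφ`.
The identities `D²φ ≡ φ`, `D(φ ∧ ψ) ≡ Dφ + Dψ` and `D(φ + ψ) ≡ Dφ ∧ Dψ` are direct
computations with solution sets. Hence `D` restricts to an anti-equivalence of `[ψ, φ]` with
`[Dφ, Dψ]`, and the m-dimension congruences are carried along it stage by stage, because
reversing a chain does not change its length.
-/

section MDim

variable {P Q : Type*} [Preorder P] [Preorder Q]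

lemma mdimCong_zero : mdimCong P 0 = fun x y => x = y :=
  Ordinal.limitRecOn_zero _ _ _

lemma mdimCong_add_one (o : Ordinal) :
    mdimCong P (o + 1) = Relation.EqvGen (fun x y => mdimCong P o x y ∨
      (x ≤ y ∧ FinLenBetween (mdimCong P o) x y) ∨ (y ≤ x ∧ FinLenBetween (mdimCong P o) y x)) :=
  Ordinal.limitRecOn_add_one _ _ _ _

lemma mdimCong_of_isSuccLimit {o : Ordinal} (ho : Order.IsSuccLimit o) :
    mdimCong P o = fun x y => ∃ o' < o, mdimCong P o' x y := by
  ext x y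
  simp [mdimCong, Ordinal.limitRecOn_limit _ _ _ _ ho]

lemma finLenBetween_of_antisymmRel (r : P → P → Prop) {x y : P}
    (h : AntisymmRel (· ≤ ·) x y) : FinLenBetween r x y := by
  refine ⟨0, fun m f hf hb _ => Nat.le_zero.mpr ?_⟩
  by_contra hm
  have h01 : (0 : Fin (m + 1)) < ⟨1, by omega⟩ := Fin.mk_lt_mk.mpr Nat.one_pos
  exact (hf h01).not_ge ((hb _).2.trans (h.ge.trans (hb _).1))

lemma mdimCong_symm {o : Ordinal} {x y : P} (h : mdimCong P o x y) : mdimCong P o y x := by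
  induction o using Ordinal.limitRecOn generalizing x y with
  | zero => rw [mdimCong_zero] at h ⊢; exact h.symm
  | add_one o _ => rw [mdimCong_add_one] at h ⊢; exact h.symm
  | limit o ho ih =>
    rw [mdimCong_of_isSuccLimit ho] at h ⊢
    obtain ⟨o', ho', h⟩ := h
    exact ⟨o', ho', ih o' ho' h⟩

lemma mdimCong_of_antisymmRel {o : Ordinal} (ho : o ≠ 0) {x x' y y' : P}
    (hx : AntisymmRel (· ≤ ·) x x') (hy : AntisymmRel (· ≤ ·) y y') (h : mdimCong P o x y) :
    mdimCong P o x' y' := by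
  have step : ∀ o', mdimCong P (o' + 1) x y → mdimCong P (o' + 1) x' y' := fun o' h => by
    rw [mdimCong_add_one] at h ⊢
    exact .trans _ x _ (.rel _ _ (Or.inr (Or.inl ⟨hx.ge, finLenBetween_of_antisymmRel _ hx.symm⟩)))
      (.trans _ y _ h (.rel _ _ (Or.inr (Or.inl ⟨hy.le, finLenBetween_of_antisymmRel _ hy⟩))))
  rcases Ordinal.zero_or_succ_or_isSuccLimit o with rfl | ⟨o, rfl⟩ | hlim
  · exact absurd rfl ho
  · rw [Order.succ_eq_add_one] at h ⊢
    exact step o h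
  · rw [mdimCong_of_isSuccLimit hlim] at h ⊢
    obtain ⟨o', ho', h⟩ := h
    refine ⟨o' + 1, hlim.add_one_lt ho', step o' ?_⟩
    rw [mdimCong_add_one]
    exact .rel _ _ (Or.inl h)

structure IsAntiEquiv (U : P → Q) (U' : Q → P) : Prop where
  antitone : Antitone U
  antitone_inv : Antitone U'
  antisymmRel_inv_apply : ∀ a, AntisymmRel (· ≤ ·) (U' (U a)) a
  antisymmRel_apply_inv : ∀ b, AntisymmRel (· ≤ ·) (U (U' b)) b

namespace IsAntiEquiv

variable {U : P → Q} {U' : Q → P}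

lemma symm (h : IsAntiEquiv U U') : IsAntiEquiv U' U :=
  ⟨h.antitone_inv, h.antitone, h.antisymmRel_apply_inv, h.antisymmRel_inv_apply⟩

lemma le_iff_le (h : IsAntiEquiv U U') (a b : P) : a ≤ b ↔ U b ≤ U a :=
  ⟨fun hab => h.antitone hab, fun hba => (h.antisymmRel_inv_apply a).ge.trans
    ((h.antitone_inv hba).trans (h.antisymmRel_inv_apply b).le)⟩

lemma lt_iff_lt (h : IsAntiEquiv U U') (a b : P) : a < b ↔ U b < U a := by
  simp only [lt_iff_le_not_ge, h.le_iff_le a b, h.le_iff_le b a]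

lemma finLenBetween {o : Ordinal} (h : IsAntiEquiv U U')
    (ih : ∀ x y, mdimCong P o x y → mdimCong Q o (U x) (U y)) {x y : P}
    (hxy : FinLenBetween (mdimCong P o) x y) : FinLenBetween (mdimCong Q o) (U y) (U x) := by
  obtain ⟨n, hn⟩ := hxy
  refine ⟨n, fun m g hg hgb hgcong => hn m (fun i => U' (g i.rev)) ?_ ?_ ?_⟩
  · exact fun i j hij => (h.symm.lt_iff_lt _ _).mp (hg (Fin.rev_lt_rev.mpr hij))
  · intro i
    exact ⟨(h.antisymmRel_inv_apply x).ge.trans ((h.symm.le_iff_le _ _).mp (hgb _).2),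
      ((h.symm.le_iff_le _ _).mp (hgb _).1).trans (h.antisymmRel_inv_apply y).le⟩
  · intro i hcong
    have hUU' := ih _ _ hcong
    simp only [Fin.rev_castSucc, Fin.rev_succ] at hUU'
    rcases eq_or_ne o 0 with rfl | ho
    · rw [mdimCong_zero] at hUU'
      exact (hg (Fin.castSucc_lt_succ (i := i.rev))).not_ge ((h.antisymmRel_apply_inv _).ge.trans
        (hUU'.le.trans (h.antisymmRel_apply_inv _).le))
    · exact hgcong i.rev (mdimCong_symm (mdimCong_of_antisymmRel ho
        (h.antisymmRel_apply_inv _) (h.antisymmRel_apply_inv _) hUU'))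

lemma mdimCong_apply (h : IsAntiEquiv U U') {o : Ordinal} {x y : P} (hxy : mdimCong P o x y) :
    mdimCong Q o (U x) (U y) := by
  induction o using Ordinal.limitRecOn generalizing x y with
  | zero => rw [mdimCong_zero] at hxy ⊢; exact congrArg U hxy
  | add_one o ih =>
    rw [mdimCong_add_one] at hxy ⊢
    induction hxy with
    | rel a b hab =>
      refine .rel _ _ ?_
      rcases hab with hab | ⟨hab, hfin⟩ | ⟨hba, hfin⟩
      · exact Or.inl (ih hab)
      · exact Or.inr (Or.inr ⟨(h.le_iff_le a b).mp hab, h.finLenBetween (fun _ _ => ih) hfin⟩)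
      · exact Or.inr (Or.inl ⟨(h.le_iff_le b a).mp hba, h.finLenBetween (fun _ _ => ih) hfin⟩)
    | refl a => exact .refl _
    | symm a b _ hUab => exact .symm _ _ hUab
    | trans a b c _ _ hUab hUbc => exact .trans _ _ _ hUab hUbc
  | limit o ho ih =>
    rw [mdimCong_of_isSuccLimit ho] at hxy ⊢
    obtain ⟨o', ho', hxy⟩ := hxy
    exact ⟨o', ho', ih o' ho' hxy⟩

lemma forall_mdimCong_iff (h : IsAntiEquiv U U') {o : Ordinal} (ho : o ≠ 0) :
    (∀ x y : P, mdimCong P o x y) ↔ ∀ x y : Q, mdimCong Q o x y :=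
  ⟨fun hP x y => mdimCong_of_antisymmRel ho (h.antisymmRel_apply_inv x)
      (h.antisymmRel_apply_inv y) (h.mdimCong_apply (hP (U' x) (U' y))),
    fun hQ x y => mdimCong_of_antisymmRel ho (h.symm.antisymmRel_apply_inv x)
      (h.symm.antisymmRel_apply_inv y) (h.symm.mdimCong_apply (hQ (U x) (U y)))⟩

lemma mdimIs_iff (h : IsAntiEquiv U U') (d : Ordinal) : MDimIs P d ↔ MDimIs Q d :=
  and_congr (h.forall_mdimCong_iff (add_pos_of_right one_pos d).ne')
    (or_congr_right' fun hd => not_congr (h.forall_mdimCong_iff hd))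

end IsAntiEquiv

end MDim

namespace PP

variable {R S : Type} [Ring R] [Ring S] {M : Type} [AddCommGroup M]

lemma pequiv_of_sol_eq {φ ψ : PP R}
    (h : ∀ (M : Type) [AddCommGroup M] [Module R M], φ.sol M = ψ.sol M) : pequiv φ ψ :=
  ⟨fun M _ _ => (h M).le, fun M _ _ => (h M).ge⟩

/-- The `j`-th equation of `φ`; the free variable is indexed by `Sum.inl ()`. -/
def row (φ : PP R) (j : φ.K) : Unit ⊕ φ.Y → R :=
  Sum.elim (fun _ => φ.a j) (fun i => φ.H i j)

lemma mem_sol_iff_row [Module R M] {φ : PP R} {x : M} :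
    x ∈ φ.sol M ↔ ∃ y : φ.Y → M, ∀ j, ∑ c, φ.row j c • Sum.elim (fun _ => x) y c = 0 := by
  simp [sol, row, Fintype.sum_sum_type]

abbrev FreeRealization (φ : PP R) : Type :=
  (Unit ⊕ φ.Y → R) ⧸ Submodule.span R (Set.range φ.row)

open Classical in
lemma mk_single_mem_sol_freeRealization (φ : PP R) :
    Submodule.Quotient.mk (Pi.single (Sum.inl ()) 1) ∈ φ.sol φ.FreeRealization := by
  rw [mem_sol_iff_row]
  refine ⟨fun i => Submodule.Quotient.mk (Pi.single (Sum.inr i) 1), fun j => ?_⟩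
  have hvar : Sum.elim (fun _ => Submodule.Quotient.mk (Pi.single (Sum.inl ()) 1))
      (fun i => Submodule.Quotient.mk (Pi.single (Sum.inr i) 1)) =
      fun c => (Submodule.Quotient.mk (Pi.single c (1 : R)) : φ.FreeRealization) := by
    ext (_ | _) <;> rfl
  rw [hvar]
  have hrow : (Submodule.Quotient.mk (φ.row j) : φ.FreeRealization) = 0 :=
    (Submodule.Quotient.mk_eq_zero _).mpr (Submodule.subset_span ⟨j, rfl⟩)
  rw [pi_eq_sum_univ' (φ.row j)] at hrow
  simpa [← Submodule.mkQ_apply] using hrow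

open Classical in
/-- Implication is syntactic; the witnesses come from the generic solution of `φ` in its free
realisation. -/
lemma exists_row_eq_sum_of_le {φ ψ : PP R} (h : φ ≤ ψ) :
    ∃ (V : Unit ⊕ ψ.Y → Unit ⊕ φ.Y → R) (G : ψ.K → φ.K → R),
      V (Sum.inl ()) = Pi.single (Sum.inl ()) 1 ∧
      ∀ j', ∑ c', ψ.row j' c' • V c' = ∑ j, G j' j • φ.row j := by
  obtain ⟨y, hy⟩ := mem_sol_iff_row.mp (h _ (mk_single_mem_sol_freeRealization φ))
  choose v hv using fun i => Submodule.Quotient.mk_surjective _ (y i)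
  let V : Unit ⊕ ψ.Y → Unit ⊕ φ.Y → R := Sum.elim (fun _ => Pi.single (Sum.inl ()) 1) v
  have hmk : ∀ c', Submodule.Quotient.mk (V c') =
      Sum.elim (fun _ => Submodule.Quotient.mk (Pi.single (Sum.inl ()) 1)) y c' := by
    rintro (_ | i)
    · rfl
    · exact hv i
  have hmem : ∀ j', ∑ c', ψ.row j' c' • V c' ∈ Submodule.span R (Set.range φ.row) := by
    intro j'
    rw [← Submodule.Quotient.mk_eq_zero, ← Submodule.mkQ_apply, map_sum]
    simpa [hmk] using hy j'
  choose G hG using fun j' => (Submodule.mem_span_range_iff_exists_fun R).mp (hmem j')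
  exact ⟨V, G, rfl, fun j' => (hG j').symm⟩

/-- Prest's elementary dual, with coefficients carried along an anti-multiplicative `f`
(see `mem_sol_dual`). Reducible, so that instances on `(dual f φ).K` unfold to `Unit ⊕ φ.Y`. -/
abbrev dual (f : R →+ S) (φ : PP R) : PP S where
  Y := φ.K
  K := Unit ⊕ φ.Y
  a := Sum.elim (fun _ => 1) 0
  H j c := -f (φ.row j c)

lemma mem_sol_dual_iff_row [Module S M] {f : R →+ S} {φ : PP R} {x : M} :
    x ∈ (dual f φ).sol M ↔
      ∃ z : φ.K → M, ∀ c, ∑ j, f (φ.row j c) • z j = Sum.elim (fun _ => x) 0 c := by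
  refine exists_congr fun z => forall_congr' fun c => ?_
  rcases c with _ | i
  · simp only [dual, Sum.elim_inl, one_smul, neg_smul, Finset.sum_neg_distrib, ← sub_eq_add_neg,
      sub_eq_zero]
    exact eq_comm
  · simp only [dual, Sum.elim_inr, Pi.zero_apply, zero_smul, neg_smul, Finset.sum_neg_distrib,
      zero_add, neg_eq_zero]

lemma mem_sol_dual [Module S M] {f : R →+ S} {φ : PP R} {x : M} :
    x ∈ (dual f φ).sol M ↔
      ∃ z : φ.K → M, x = ∑ j, f (φ.a j) • z j ∧ ∀ i, ∑ j, f (φ.H i j) • z j = 0 := by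
  simp [mem_sol_dual_iff_row, row, eq_comm]

lemma dual_le_dual {f : R →+ S} (hf_one : f 1 = 1) (hf_mul : ∀ a b, f (a * b) = f b * f a)
    {φ ψ : PP R} (h : φ ≤ ψ) : dual f ψ ≤ dual f φ := by
  obtain ⟨V, G, hV, hG⟩ := exists_row_eq_sum_of_le h
  intro M _ _ x hx
  obtain ⟨z, hz⟩ := mem_sol_dual_iff_row.mp hx
  refine mem_sol_dual_iff_row.mpr ⟨fun j => ∑ j', f (G j' j) • z j', fun c => ?_⟩
  calc ∑ j, f (φ.row j c) • ∑ j', f (G j' j) • z j'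
      = ∑ j', f ((∑ j, G j' j • φ.row j) c) • z j' := by
        simp only [Finset.smul_sum, smul_smul, ← hf_mul, Finset.sum_apply, map_sum,
          Finset.sum_smul, Pi.smul_apply, smul_eq_mul]
        exact Finset.sum_comm
    _ = ∑ c', f (V c' c) • ∑ j', f (ψ.row j' c') • z j' := by
        simp_rw [← hG, Finset.sum_apply, map_sum, Finset.sum_smul, Finset.smul_sum, smul_smul,
          Pi.smul_apply, smul_eq_mul, ← hf_mul]
        exact Finset.sum_comm
    _ = Sum.elim (fun _ => x) 0 c := by
        simp only [hz, Fintype.sum_sum_type, hV]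
        rcases c with _ | i <;> simp [hf_one]

lemma sol_dual_dual [Module R M] {f : R →+ S} {g : S →+ R} (hg_one : g 1 = 1)
    (hgf : ∀ r, g (f r) = r) (φ : PP R) : (dual g (dual f φ)).sol M = φ.sol M := by
  ext x
  rw [mem_sol_dual, mem_sol_iff_row]
  simp only [Fintype.sum_sum_type, Sum.elim_inl, Sum.elim_inr, hg_one, one_smul, Pi.zero_apply,
    map_zero, zero_smul, Finset.sum_const_zero, add_zero, map_neg, hgf, neg_smul,
    Finset.sum_neg_distrib, Fintype.sum_unique, neg_eq_zero]
  constructor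
  · rintro ⟨z, rfl, hz⟩
    exact ⟨z ∘ Sum.inr, hz⟩
  · rintro ⟨y, hy⟩
    exact ⟨Sum.elim (fun _ => x) y, rfl, hy⟩

lemma mem_sol_meet [Module R M] {φ ψ : PP R} {x : M} :
    x ∈ (meet φ ψ).sol M ↔ x ∈ φ.sol M ∧ x ∈ ψ.sol M := by
  unfold meet
  simp only [sol, Set.mem_ofPred_eq, Fintype.sum_sum_type, Sum.forall, Sum.elim_inl,
    Sum.elim_inr, zero_smul, Finset.sum_const_zero, add_zero, zero_add]
  constructor
  · rintro ⟨y, hy1, hy2⟩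
    exact ⟨⟨y ∘ Sum.inl, hy1⟩, ⟨y ∘ Sum.inr, hy2⟩⟩
  · rintro ⟨⟨y1, hy1⟩, ⟨y2, hy2⟩⟩
    exact ⟨Sum.elim y1 y2, hy1, hy2⟩

lemma mem_sol_join [Module R M] {φ ψ : PP R} {x : M} :
    x ∈ (join φ ψ).sol M ↔ ∃ u ∈ φ.sol M, ∃ v ∈ ψ.sol M, u + v = x := by
  unfold join
  simp only [sol, Set.mem_ofPred_eq, Fintype.sum_sum_type, Sum.forall, Sum.elim_inl,
    Sum.elim_inr, zero_smul, Finset.sum_const_zero, add_zero, zero_add, Fintype.sum_unique]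
  constructor
  · rintro ⟨y, hy1, hy2⟩
    refine ⟨_, ⟨y ∘ Sum.inr ∘ Sum.inl, hy1⟩, x - y (Sum.inl default),
      ⟨y ∘ Sum.inr ∘ Sum.inr, fun j => ?_⟩, add_sub_cancel _ _⟩
    rw [← hy2 j, smul_sub, neg_smul]
    simp only [Function.comp_apply]
    abel
  · rintro ⟨u, ⟨y1, hy1⟩, v, ⟨y2, hy2⟩, rfl⟩
    refine ⟨Sum.elim (fun _ => u) (Sum.elim y1 y2), hy1, fun j => ?_⟩
    rw [← hy2 j, smul_add, neg_smul]
    simp only [Sum.elim_inl, Sum.elim_inr]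
    abel

lemma sol_dual_meet [Module S M] (f : R →+ S) (φ ψ : PP R) :
    (dual f (meet φ ψ)).sol M = (join (dual f φ) (dual f ψ)).sol M := by
  ext x
  simp only [mem_sol_dual, mem_sol_join]
  unfold meet
  simp only [Fintype.sum_sum_type, Sum.forall, Sum.elim_inl, Sum.elim_inr, map_zero,
    zero_smul, Finset.sum_const_zero, add_zero, zero_add]
  constructor
  · rintro ⟨z, rfl, hz1, hz2⟩
    exact ⟨_, ⟨z ∘ Sum.inl, rfl, hz1⟩, _, ⟨z ∘ Sum.inr, rfl, hz2⟩, rfl⟩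
  · rintro ⟨_, ⟨z1, rfl, hz1⟩, _, ⟨z2, rfl, hz2⟩, rfl⟩
    exact ⟨Sum.elim z1 z2, rfl, hz1, hz2⟩

lemma sol_dual_join [Module S M] (f : R →+ S) (φ ψ : PP R) :
    (dual f (join φ ψ)).sol M = (meet (dual f φ) (dual f ψ)).sol M := by
  ext x
  simp only [mem_sol_dual, mem_sol_meet]
  unfold join
  simp only [Fintype.sum_sum_type, Sum.forall, Sum.elim_inl, Sum.elim_inr, map_zero, map_neg,
    zero_smul, neg_smul, Finset.sum_const_zero, Finset.sum_neg_distrib, add_zero, zero_add]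
  constructor
  · rintro ⟨z, rfl, hbal, hz1, hz2⟩
    exact ⟨⟨z ∘ Sum.inl, (add_neg_eq_zero.mp (hbal default)).symm, hz1⟩, ⟨z ∘ Sum.inr, rfl, hz2⟩⟩
  · rintro ⟨⟨z1, hx, hz1⟩, ⟨z2, rfl, hz2⟩⟩
    exact ⟨Sum.elim z1 z2, rfl, fun _ => add_neg_eq_zero.mpr hx.symm, hz1, hz2⟩

end PP

lemma IsAntiEquiv.mdimIs_ppInterval_iff {R S : Type} [Ring R] [Ring S] {D : PP R → PP S}
    {D' : PP S → PP R} (h : IsAntiEquiv D D') (ψ φ : PP R) (d : Ordinal) :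
    MDimIs (PPInterval ψ φ) d ↔ MDimIs (PPInterval (D φ) (D ψ)) d := by
  let U : PPInterval ψ φ → PPInterval (D φ) (D ψ) := fun θ =>
    ⟨D θ.1, h.antitone θ.2.2, h.antitone θ.2.1⟩
  let U' : PPInterval (D φ) (D ψ) → PPInterval ψ φ := fun θ =>
    ⟨D' θ.1, (h.antisymmRel_inv_apply ψ).ge.trans (h.antitone_inv θ.2.2),
      (h.antitone_inv θ.2.1).trans (h.antisymmRel_inv_apply φ).le⟩
  exact IsAntiEquiv.mdimIs_iff (U := U) (U' := U') ⟨fun _ _ hab => h.antitone hab,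
    fun _ _ hab => h.antitone_inv hab, fun a => h.antisymmRel_inv_apply a.1,
    fun b => h.antisymmRel_apply_inv b.1⟩ d

open PP in
/-- Elementary duality `D` is an anti-isomorphism of the lattice of pp formulas for left
`R`-modules with the lattice of pp formulas for right `R`-modules (= left `Rᵐᵒᵖ`-modules),
satisfying `D(φ ∧ ψ) = Dφ + Dψ`, `D(φ + ψ) = Dφ ∧ Dψ` and `D² φ ≡ φ`.  Consequently for
any interval `[ψ, φ]` in the left pp-lattice, the m-dimension of `[ψ, φ]` equals the
m-dimension of the dual interval `[Dφ, Dψ]` in the right pp-lattice. -/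
theorem elementary_duality (R : Type) [Ring R] :
    ∃ (D : PP R → PP Rᵐᵒᵖ) (D' : PP Rᵐᵒᵖ → PP R),
      (∀ φ ψ : PP R, φ ≤ ψ ↔ D ψ ≤ D φ) ∧
      (∀ φ ψ : PP Rᵐᵒᵖ, φ ≤ ψ ↔ D' ψ ≤ D' φ) ∧
      (∀ φ ψ : PP R, pequiv (D (meet φ ψ)) (join (D φ) (D ψ))) ∧
      (∀ φ ψ : PP R, pequiv (D (join φ ψ)) (meet (D φ) (D ψ))) ∧
      (∀ φ : PP R, pequiv (D' (D φ)) φ) ∧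
      (∀ ψ : PP Rᵐᵒᵖ, pequiv (D (D' ψ)) ψ) ∧
      (∀ (ψ φ : PP R), ψ ≤ φ → ∀ d : Ordinal,
        MDimIs (PPInterval ψ φ) d ↔ MDimIs (PPInterval (D φ) (D ψ)) d) := by
  let op : R →+ Rᵐᵒᵖ := MulOpposite.opAddEquiv.toAddMonoidHom
  let unop : Rᵐᵒᵖ →+ R := MulOpposite.opAddEquiv.symm.toAddMonoidHom
  have hDD : ∀ φ, pequiv (dual unop (dual op φ)) φ := fun φ =>
    pequiv_of_sol_eq fun M _ _ => sol_dual_dual MulOpposite.unop_one MulOpposite.unop_op φ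
  have hDD' : ∀ ψ, pequiv (dual op (dual unop ψ)) ψ := fun ψ =>
    pequiv_of_sol_eq fun M _ _ => sol_dual_dual MulOpposite.op_one MulOpposite.op_unop ψ
  have hD : IsAntiEquiv (dual op) (dual unop) :=
    ⟨fun _ _ => dual_le_dual MulOpposite.op_one MulOpposite.op_mul,
      fun _ _ => dual_le_dual MulOpposite.unop_one MulOpposite.unop_mul, hDD, hDD'⟩
  refine ⟨dual op, dual unop, hD.le_iff_le, hD.symm.le_iff_le,
    fun φ ψ => pequiv_of_sol_eq fun M _ _ => sol_dual_meet op φ ψ,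
    fun φ ψ => pequiv_of_sol_eq fun M _ _ => sol_dual_join op φ ψ, hDD, hDD',
    fun ψ φ _ => hD.mdimIs_ppInterval_iff ψ φ⟩
end
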